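/- In the insertion model for random permutations, the conditional covariance of the increments satisfies E[ΔD_{n+1} ΔD'_{n+1} | F_n] − E[ΔD_{n+1} | F_n]·E[ΔD'_{n+1} | F_n] = n/(n+1)², where ΔD_{n+1} = D_{n+1} − D_n and ΔD'_{n+1} = D'_{n+1} − D'_n. -/

import Mathlib

/-- Number of descents of a permutation of `Fin n`. -/
def descNum {n : ℕ} (σ : Equiv.Perm (Fin n)) : ℕ :=
  (Finset.univ.filter fun p : Fin n × Fin n =>
    (p.1 : ℕ) + 1 = (p.2 : ℕ) ∧ σ p.2 < σ p.1).card

/-- Insertion of a point in cell `(k, ℓ)` of the graphical representation of `σ`: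
the new permutation sends `k ↦ ℓ` and otherwise acts as `σ` on the remaining
positions/values (via `succAbove`). -/
def insertPerm {n : ℕ} (σ : Equiv.Perm (Fin n)) (k ℓ : Fin (n + 1)) :
    Equiv.Perm (Fin (n + 1)) :=
  (finSuccEquiv' k).trans ((Equiv.optionCongr σ).trans (finSuccEquiv' ℓ).symm)


/-!
Inserting the new point in cell `(k, ℓ)` changes the number of descents by
`descGain σ k ℓ - lostDescent σ k`: the new point breaks up the descent of `σ` at positions
`(k - 1, k)`, if there is one, and forms a descent with each neighbour lying on the appropriate
side of it. For fixed `ℓ`, a point of `σ` forms such a descent for exactly one `k`, so the cells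
where it counts form a staircase with one cell in every row; for `σ⁻¹` rows and columns swap.
A row staircase and a column staircase meet in exactly one cell, or in two when they come from
the same point, whence `∑ descGain σ k ℓ * descGain σ⁻¹ ℓ k = n² + n`. All other terms of the
covariance only involve row and column sums, which are `n` for `descGain` and `descNum σ` for
`lostDescent`.
-/

open Finset

namespace InsertionModel

variable {n : ℕ}

lemma val_succAbove (k : Fin (n + 1)) (i : Fin n) :
    (k.succAbove i : ℕ) = if (i : ℕ) < k then (i : ℕ) else i + 1 := by
  unfold Fin.succAbove
  split_ifs <;> simp_all [Fin.lt_def]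

lemma insertPerm_apply_self (σ : Equiv.Perm (Fin n)) (k ℓ : Fin (n + 1)) :
    insertPerm σ k ℓ k = ℓ := by
  simp [insertPerm]

lemma insertPerm_apply_succAbove (σ : Equiv.Perm (Fin n)) (k ℓ : Fin (n + 1)) (i : Fin n) :
    insertPerm σ k ℓ (k.succAbove i) = ℓ.succAbove (σ i) := by
  simp [insertPerm]

lemma insertPerm_inv (σ : Equiv.Perm (Fin n)) (k ℓ : Fin (n + 1)) :
    (insertPerm σ k ℓ)⁻¹ = insertPerm σ⁻¹ ℓ k := by
  ext x
  simp [insertPerm, Equiv.Perm.inv_def, Equiv.optionCongr_symm]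

lemma descNum_eq_sum (τ : Equiv.Perm (Fin n)) :
    (descNum τ : ℝ) =
      ∑ u : Fin n, ∑ v : Fin n, if (u : ℕ) + 1 = v ∧ (τ v : ℕ) < τ u then 1 else 0 := by
  rw [descNum, card_filter, Nat.cast_sum, Fintype.sum_prod_type]
  push_cast
  simp only [Fin.lt_def]

/-- The point `(a, v)` of a permutation diagram forms a descent with a point inserted in cell
`(k, ℓ)` when the new point lands right after it and below it (`k = a + 1`, `ℓ ≤ v`), or right
before it and above it (`k = a`, `v < ℓ`). -/
noncomputable def newDescent (a v k ℓ : ℕ) : ℝ :=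
  (if k = a + 1 ∧ ℓ ≤ v then 1 else 0) + (if k = a ∧ v < ℓ then 1 else 0)

lemma sum_newDescent {N a : ℕ} (ha : a + 1 < N) (v ℓ : ℕ) :
    ∑ k : Fin N, newDescent a v k ℓ = 1 := by
  rw [Fin.sum_univ_eq_sum_range (newDescent a v · ℓ)]
  simp only [newDescent, sum_add_distrib, ite_and, sum_ite_eq', mem_range, if_pos ha,
    if_pos (Nat.lt_of_succ_lt ha)]
  split_ifs <;> first | omega | norm_num

/-- The staircases of `(a, v)` and of the transposed point `(w, b)` can only meet in the four
cells `{a, a + 1} × {w, w + 1}`. -/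
lemma sum_sum_newDescent_mul {N a v b w : ℕ} (ha : a + 1 < N) (hw : w + 1 < N)
    (hinj : a = b ↔ v = w) :
    ∑ k : Fin N, ∑ ℓ : Fin N, newDescent a v k ℓ * newDescent w b ℓ k =
      1 + if a = b then 1 else 0 := by
  simp only [fun k : ℕ =>
    Fin.sum_univ_eq_sum_range (fun ℓ => newDescent a v k ℓ * newDescent w b ℓ k) N]
  rw [Fin.sum_univ_eq_sum_range (fun k => ∑ ℓ ∈ range N, newDescent a v k ℓ * newDescent w b ℓ k)]
  have ha' : a < N := by omega
  have hw' : w < N := by omega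
  simp only [newDescent, add_mul, mul_add, ite_and, ite_mul, mul_ite, one_mul, zero_mul, mul_zero,
    sum_add_distrib, sum_ite_eq', mem_range, hw, ha', hw', if_true, ← sum_filter, mem_filter, ha,
    true_and]
  split_ifs <;> first | omega | norm_num

noncomputable def descGain (σ : Equiv.Perm (Fin n)) (k ℓ : ℕ) : ℝ :=
  ∑ i : Fin n, newDescent i (σ i) k ℓ

noncomputable def lostDescent (σ : Equiv.Perm (Fin n)) (k : ℕ) : ℝ :=
  ∑ i : Fin n, ∑ j : Fin n, if (j : ℕ) = k ∧ (i : ℕ) + 1 = j ∧ (σ j : ℕ) < σ i then 1 else 0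

lemma sum_descGain (σ : Equiv.Perm (Fin n)) (ℓ : ℕ) :
    ∑ k : Fin (n + 1), descGain σ k ℓ = n := by
  simp only [descGain]
  rw [sum_comm]
  simp [sum_newDescent]

lemma sum_lostDescent (σ : Equiv.Perm (Fin n)) :
    ∑ k : Fin (n + 1), lostDescent σ k = descNum σ := by
  simp only [descNum_eq_sum, lostDescent]
  rw [sum_comm]
  refine sum_congr rfl fun i _ => ?_
  rw [sum_comm]
  refine sum_congr rfl fun j _ => ?_
  rw [Fin.sum_univ_eq_sum_range (fun k => if (j : ℕ) = k ∧ _ then (1 : ℝ) else 0)]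
  simp [ite_and]

lemma descGain_inv (σ : Equiv.Perm (Fin n)) (ℓ k : ℕ) :
    descGain σ⁻¹ ℓ k = ∑ j : Fin n, newDescent (σ j) j ℓ k := by
  rw [descGain, ← Equiv.sum_comp σ]
  simp

lemma sum_descGain_mul_descGain_inv (σ : Equiv.Perm (Fin n)) :
    ∑ k : Fin (n + 1), ∑ ℓ : Fin (n + 1), descGain σ k ℓ * descGain σ⁻¹ ℓ k = n * (n + 1) := by
  calc ∑ k : Fin (n + 1), ∑ ℓ : Fin (n + 1), descGain σ k ℓ * descGain σ⁻¹ ℓ k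
      = ∑ k : Fin (n + 1), ∑ ℓ : Fin (n + 1), ∑ i : Fin n, ∑ j : Fin n,
          newDescent i (σ i) k ℓ * newDescent (σ j) j ℓ k := by
        simp only [descGain_inv]
        simp only [descGain, sum_mul_sum]
    _ = ∑ i : Fin n, ∑ j : Fin n, ∑ k : Fin (n + 1), ∑ ℓ : Fin (n + 1),
          newDescent i (σ i) k ℓ * newDescent (σ j) j ℓ k := by
        simp_rw [sum_comm (s := (univ : Finset (Fin (n + 1)))) (t := (univ : Finset (Fin n)))]
    _ = ∑ i : Fin n, ∑ j : Fin n, (1 + if (i : ℕ) = j then 1 else 0) := by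
        refine sum_congr rfl fun i _ => sum_congr rfl fun j _ => ?_
        refine sum_sum_newDescent_mul (by omega) (by omega) ?_
        rw [Fin.val_inj, Fin.val_inj, σ.injective.eq_iff]
    _ = n * (n + 1) := by
        simp [sum_add_distrib, Fin.val_inj]
        ring

lemma descNum_insertPerm (σ : Equiv.Perm (Fin n)) (k ℓ : Fin (n + 1)) :
    (descNum (insertPerm σ k ℓ) : ℝ) = descNum σ + descGain σ k ℓ - lostDescent σ k := by
  have hgain : (∑ i : Fin n, if (k : ℕ) + 1 = k.succAbove i ∧ (ℓ.succAbove (σ i) : ℕ) < ℓ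
        then (1 : ℝ) else 0) +
      ∑ i : Fin n, (if (k.succAbove i : ℕ) + 1 = k ∧ (ℓ : ℕ) < ℓ.succAbove (σ i)
        then (1 : ℝ) else 0) = descGain σ k ℓ := by
    rw [descGain, ← sum_add_distrib]
    refine sum_congr rfl fun i _ => ?_
    rw [newDescent, val_succAbove, val_succAbove]
    split_ifs <;> first | omega | norm_num
  have hkept : (∑ i : Fin n, ∑ j : Fin n,
      if (k.succAbove i : ℕ) + 1 = k.succAbove j ∧
        (ℓ.succAbove (σ j) : ℕ) < ℓ.succAbove (σ i) then (1 : ℝ) else 0) =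
      descNum σ - lostDescent σ k := by
    rw [descNum_eq_sum, lostDescent, ← sum_sub_distrib]
    refine sum_congr rfl fun i _ => ?_
    rw [← sum_sub_distrib]
    refine sum_congr rfl fun j _ => ?_
    rw [val_succAbove, val_succAbove, val_succAbove, val_succAbove]
    split_ifs <;> first | omega | norm_num
  rw [descNum_eq_sum, Fin.sum_univ_succAbove _ k]
  simp only [Fin.sum_univ_succAbove _ k, insertPerm_apply_self, insertPerm_apply_succAbove,
    sum_add_distrib, lt_self_iff_false, and_false, if_false, zero_add]
  linarith

lemma sum_sum_descGain_sub_lostDescent (σ : Equiv.Perm (Fin n)) :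
    ∑ k : Fin (n + 1), ∑ ℓ : Fin (n + 1), (descGain σ k ℓ - lostDescent σ k) =
      (n + 1) * (n - descNum σ) := by
  rw [sum_comm]
  simp only [sum_sub_distrib, sum_descGain, sum_lostDescent, sum_const, card_univ,
    Fintype.card_fin, nsmul_eq_mul]
  push_cast
  ring

lemma sum_sum_descGain_sub_lostDescent_mul (σ : Equiv.Perm (Fin n)) :
    ∑ k : Fin (n + 1), ∑ ℓ : Fin (n + 1),
        (descGain σ k ℓ - lostDescent σ k) * (descGain σ⁻¹ ℓ k - lostDescent σ⁻¹ ℓ) =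
      (n - descNum σ) * (n - descNum σ⁻¹) + n := by
  have hGL : ∑ k : Fin (n + 1), ∑ ℓ : Fin (n + 1), descGain σ k ℓ * lostDescent σ⁻¹ ℓ =
      n * descNum σ⁻¹ := by
    rw [sum_comm]
    simp only [← sum_mul, sum_descGain, ← mul_sum, sum_lostDescent]
  have hLG : ∑ k : Fin (n + 1), ∑ ℓ : Fin (n + 1), lostDescent σ k * descGain σ⁻¹ ℓ k =
      descNum σ * n := by
    simp only [← mul_sum, sum_descGain, ← sum_mul, sum_lostDescent]
  have hLL : ∑ k : Fin (n + 1), ∑ ℓ : Fin (n + 1), lostDescent σ k * lostDescent σ⁻¹ ℓ =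
      descNum σ * descNum σ⁻¹ := by
    simp only [← mul_sum, ← sum_mul, sum_lostDescent]
  simp only [sub_mul, mul_sub, sum_sub_distrib, sum_descGain_mul_descGain_inv, hGL, hLG, hLL]
  ring

end InsertionModel

open InsertionModel in
/-- The conditional covariance of the descent and inverse-descent increments under a
uniform insertion equals `n/(n+1)²`. -/
theorem stmt_15 (n : ℕ) (σ : Equiv.Perm (Fin n)) :
    (∑ c : Fin (n + 1) × Fin (n + 1),
        ((descNum (insertPerm σ c.1 c.2) : ℝ) - descNum σ) *
          ((descNum (insertPerm σ c.1 c.2)⁻¹ : ℝ) - descNum σ⁻¹)) / (n + 1) ^ 2 -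
      ((∑ c : Fin (n + 1) × Fin (n + 1),
          ((descNum (insertPerm σ c.1 c.2) : ℝ) - descNum σ)) / (n + 1) ^ 2) *
        ((∑ c : Fin (n + 1) × Fin (n + 1),
          ((descNum (insertPerm σ c.1 c.2)⁻¹ : ℝ) - descNum σ⁻¹)) / (n + 1) ^ 2) =
      (n : ℝ) / (n + 1) ^ 2 := by
  have hΔ (k ℓ : Fin (n + 1)) : (descNum (insertPerm σ k ℓ) : ℝ) - descNum σ =
      descGain σ k ℓ - lostDescent σ k := by
    rw [descNum_insertPerm]; ring
  have hΔinv (k ℓ : Fin (n + 1)) : (descNum (insertPerm σ k ℓ)⁻¹ : ℝ) - descNum σ⁻¹ =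
      descGain σ⁻¹ ℓ k - lostDescent σ⁻¹ ℓ := by
    rw [insertPerm_inv, descNum_insertPerm]; ring
  have hsum_inv : ∑ k : Fin (n + 1), ∑ ℓ : Fin (n + 1),
      (descGain σ⁻¹ ℓ k - lostDescent σ⁻¹ ℓ) = (n + 1) * (n - descNum σ⁻¹) := by
    rw [sum_comm, sum_sum_descGain_sub_lostDescent]
  simp only [Fintype.sum_prod_type, hΔ, hΔinv]
  rw [sum_sum_descGain_sub_lostDescent_mul, sum_sum_descGain_sub_lostDescent, hsum_inv]
  field_simp
  ring
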